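/- arXiv:2306.10375 — 2 statements merged into one kernel-verified Lean document; each statement's English description precedes it below -/
import Mathlib

section
/- Let F be a graph with s vertices, t edges, and minimum degree δ ≥ 1. Then for every n ≥ s, wsat(K_n, F) ≥ t - 1 + (δ-1)(n-s)/2. -/
open SimpleGraph Finset Filter

/-- `F` has a copy (an injective graph homomorphism image) in `G`. -/
def HasCopy {W V : Type*} (F : SimpleGraph W) (G : SimpleGraph V) : Prop :=
  ∃ f : W ↪ V, ∀ a b, F.Adj a b → G.Adj (f a) (f b)

/-- Adding the edge `xy` to `H` creates a new copy of `F` containing `xy`. -/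
def NewCopyStep {W V : Type*} (F : SimpleGraph W) (H : SimpleGraph V) (x y : V) : Prop :=
  ¬ H.Adj x y ∧
  ∃ f : W ↪ V, ∃ a b : W, F.Adj a b ∧ f a = x ∧ f b = y ∧
    ∀ c d, F.Adj c d → (H ⊔ SimpleGraph.fromEdgeSet {s(x, y)}).Adj (f c) (f d)

/-- The list `l` of edges can be added successively to `H`, each addition creating a
new copy of `F` containing the added edge. -/
def SatProcess {W V : Type*} (F : SimpleGraph W) : SimpleGraph V → List (V × V) → Prop
  | _, [] => True
  | H, e :: l => NewCopyStep F H e.1 e.2 ∧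
      SatProcess F (H ⊔ SimpleGraph.fromEdgeSet {s(e.1, e.2)}) l

/-- The graph obtained from `H` by adding all edges in the list `l`. -/
def addEdges {V : Type*} (H : SimpleGraph V) (l : List (V × V)) : SimpleGraph V :=
  H ⊔ SimpleGraph.fromEdgeSet {e | ∃ p ∈ l, e = s(p.1, p.2)}

/-- `H` is weakly `(G, F)`-saturated. -/
def WeaklySaturated {W V : Type*} (G : SimpleGraph V) (F : SimpleGraph W)
    (H : SimpleGraph V) : Prop :=
  H ≤ G ∧ ¬ HasCopy F H ∧ ∃ l : List (V × V), SatProcess F H l ∧ addEdges H l = G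

/-- The weak saturation number `wsat(G, F)`. -/
noncomputable def wsat {W V : Type*} (G : SimpleGraph V) (F : SimpleGraph W) : ℕ :=
  sInf {m | ∃ H, WeaklySaturated G F H ∧ H.edgeSet.ncard = m}

/-! Let `H` be a weakly saturated graph with `wsat(K_n, F)` edges and `xy` the first edge added.
Every vertex of `H` has degree at least `δ - 1`: the first edge added at a vertex lies in a copy
of `F`, where the vertex has degree at least `δ`, and a vertex at which no edge is ever added has
degree `n - 1`. In `H + xy` the `s` vertices of the new copy of `F` carry degree sum at least
`2t` and each of the other `n - s` vertices at least `δ - 1`, so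
`2 (e(H) + 1) ≥ 2t + (n - s)(δ - 1)`.
A weakly saturated graph exists: any maximal `F`-free graph is one. -/

namespace SimpleGraph

variable {W V : Type*}

lemma ncard_neighborSet_edge_le_one [Finite V] (x y v : V) :
    ((edge x y).neighborSet v).ncard ≤ 1 := by
  rw [Set.ncard_le_one]
  intro a ha b hb
  simp only [mem_neighborSet, edge_adj] at ha hb
  grind

lemma neighborSet_edge_of_ne {x y v : V} (hx : v ≠ x) (hy : v ≠ y) :
    (edge x y).neighborSet v = ∅ := by
  ext w
  simp [edge_adj, hx, hy]

lemma ncard_neighborSet_sup_edge_le [Finite V] (H : SimpleGraph V) (x y v : V) :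
    ((H ⊔ edge x y).neighborSet v).ncard ≤ (H.neighborSet v).ncard + 1 := by
  rw [neighborSet_sup]
  exact (Set.ncard_union_le _ _).trans (by grw [ncard_neighborSet_edge_le_one])

lemma ncard_edgeSet_sup_edge [Finite V] {G : SimpleGraph V} {x y : V} (hne : x ≠ y)
    (hxy : ¬ G.Adj x y) : (G ⊔ edge x y).edgeSet.ncard = G.edgeSet.ncard + 1 := by
  rw [edgeSet_sup, edgeSet_edge_of_ne hne, Set.union_singleton,
    Set.ncard_insert_of_notMem (by rwa [mem_edgeSet])]

lemma sum_ncard_neighborSet [Fintype V] (G : SimpleGraph V) :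
    ∑ v, (G.neighborSet v).ncard = 2 * G.edgeSet.ncard := by
  classical
  simp only [← Nat.card_coe_set_eq, Nat.card_eq_fintype_card, card_neighborSet_eq_degree,
    sum_degrees_eq_twice_card_edges, ← coe_edgeFinset, coe_sort_coe, Fintype.card_coe]

lemma minDegree_le_card [Fintype W] (F : SimpleGraph W) [DecidableRel F.Adj] :
    F.minDegree ≤ Fintype.card W := by
  cases isEmpty_or_nonempty W
  · simp [minDegree_of_subsingleton]
  · exact F.minDegree_lt_card.le

lemma minDegree_le_ncard_neighborSet [Fintype W] (F : SimpleGraph W) [DecidableRel F.Adj]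
    (c : W) : F.minDegree ≤ (F.neighborSet c).ncard := by
  rw [← Nat.card_coe_set_eq, Nat.card_eq_fintype_card, card_neighborSet_eq_degree]
  exact F.minDegree_le_degree c

lemma ncard_neighborSet_le_of_hom [Finite V] {F : SimpleGraph W} {G : SimpleGraph V}
    (f : W ↪ V) (hf : ∀ a b, F.Adj a b → G.Adj (f a) (f b)) (c : W) :
    (F.neighborSet c).ncard ≤ (G.neighborSet (f c)).ncard :=
  Set.ncard_le_ncard_of_injOn f (fun d hd => hf c d hd) f.injective.injOn

lemma two_mul_ncard_edgeSet_add_le_of_hom [Fintype W] [Fintype V] {F : SimpleGraph W}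
    {G : SimpleGraph V} (f : W ↪ V) (hf : ∀ a b, F.Adj a b → G.Adj (f a) (f b)) {k : ℕ}
    (hk : ∀ v ∉ Set.range f, k ≤ (G.neighborSet v).ncard) :
    2 * F.edgeSet.ncard + (Fintype.card V - Fintype.card W) * k ≤ 2 * G.edgeSet.ncard := by
  classical
  rw [← sum_ncard_neighborSet F, ← sum_ncard_neighborSet G,
    ← sum_add_sum_compl (univ.map f)]
  gcongr
  · rw [sum_map]
    exact sum_le_sum fun c _ => ncard_neighborSet_le_of_hom f hf c
  · calc (Fintype.card V - Fintype.card W) * k = ∑ _v ∈ (univ.map f)ᶜ, k := by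
          simp [card_compl]
      _ ≤ _ := sum_le_sum fun v hv => hk v (by simpa using hv)

end SimpleGraph

section WeakSaturation

variable {W V : Type*} {F : SimpleGraph W}

lemma addEdges_nil (H : SimpleGraph V) : addEdges H [] = H := by
  simp [addEdges]

lemma addEdges_cons (H : SimpleGraph V) (p : V × V) (l : List (V × V)) :
    addEdges H (p :: l) = addEdges (H ⊔ edge p.1 p.2) l := by
  simp only [addEdges, edge, sup_assoc, ← fromEdgeSet_union]
  congr 2
  ext e
  simp [or_and_right, exists_or, eq_comm]

lemma hasCopy_top (F : SimpleGraph W) (f : W ↪ V) : HasCopy F (⊤ : SimpleGraph V) :=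
  ⟨f, fun _ _ hab => f.injective.ne hab.ne⟩

lemma not_hasCopy_bot {a b : W} (hab : F.Adj a b) : ¬ HasCopy F (⊥ : SimpleGraph V) :=
  fun ⟨_, hf⟩ => hf a b hab

-- A copy of `F` in `M + xy` must use `xy`, since `M` is `F`-free.
lemma newCopyStep_of_hasCopy_sup_edge {M H : SimpleGraph V} {x y : V} (hM : ¬ HasCopy F M)
    (hMH : M ≤ H) (hxy : ¬ H.Adj x y) (h : HasCopy F (M ⊔ edge x y)) : NewCopyStep F H x y := by
  obtain ⟨f, hf⟩ := h
  suffices ∃ a b, F.Adj a b ∧ f a = x ∧ f b = y by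
    obtain ⟨a, b, hab, ha, hb⟩ := this
    exact ⟨hxy, f, a, b, hab, ha, hb, fun c d hcd => sup_le_sup_right hMH _ (hf c d hcd)⟩
  by_contra! hE
  refine hM ⟨f, fun c d hcd => ?_⟩
  have hcd' := hf c d hcd
  rw [sup_adj, edge_adj] at hcd'
  rcases hcd' with h | ⟨⟨h1, h2⟩ | ⟨h1, h2⟩, _⟩
  · exact h
  · exact absurd h2 (hE c d hcd h1)
  · exact absurd h1 (hE d c hcd.symm h2)

lemma SatProcess.ncard_neighborSet_addEdges_le_or [Finite V] {k : ℕ}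
    (hk : ∀ c, k ≤ (F.neighborSet c).ncard) {H : SimpleGraph V} {l : List (V × V)}
    (hl : SatProcess F H l) (v : V) :
    ((addEdges H l).neighborSet v).ncard ≤ (H.neighborSet v).ncard ∨
      k - 1 ≤ (H.neighborSet v).ncard := by
  induction l generalizing H with
  | nil => exact Or.inl (by rw [addEdges_nil])
  | cons p l ih =>
    obtain ⟨x, y⟩ := p
    obtain ⟨⟨-, f, a, b, hab, rfl, rfl, hf⟩, hl⟩ := hl
    by_cases hv : v = f a ∨ v = f b
    · right
      obtain ⟨c, rfl⟩ : ∃ c, v = f c := hv.elim (⟨a, ·⟩) (⟨b, ·⟩)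
      have := (hk c).trans (ncard_neighborSet_le_of_hom (G := H ⊔ edge (f a) (f b)) f hf c)
      have := H.ncard_neighborSet_sup_edge_le (f a) (f b) (f c)
      omega
    · rw [not_or] at hv
      have hnbhd : (H ⊔ edge (f a) (f b)).neighborSet v = H.neighborSet v := by
        rw [neighborSet_sup, neighborSet_edge_of_ne hv.1 hv.2, Set.union_empty]
      rw [addEdges_cons, ← hnbhd]
      exact ih hl

lemma exists_satProcess_addEdges_eq [Finite V] {G M H : SimpleGraph V}
    (hM : Maximal (fun M => M ≤ G ∧ ¬ HasCopy F M) M) (hMH : M ≤ H) (hHG : H ≤ G) :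
    ∃ l, SatProcess F H l ∧ addEdges H l = G := by
  induction H using WellFoundedGT.induction with | _ H ih =>
  by_cases hHG' : H = G
  · exact ⟨[], trivial, by rw [addEdges_nil, hHG']⟩
  obtain ⟨x, y, hGxy, hHxy⟩ : ∃ x y, G.Adj x y ∧ ¬ H.Adj x y := by
    by_contra! h
    exact hHG' (le_antisymm hHG fun x y => h x y)
  have hedge : edge x y ≤ G := G.edge_le_iff.mpr (Or.inr hGxy)
  have hlt : H < H ⊔ edge x y := H.lt_sup_edge x y hGxy.ne hHxy
  obtain ⟨l, hl, hlG⟩ := ih _ hlt (hMH.trans hlt.le) (sup_le hHG hedge)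
  refine ⟨(x, y) :: l, ⟨newCopyStep_of_hasCopy_sup_edge hM.prop.2 hMH hHxy ?_, hl⟩,
    by rwa [addEdges_cons]⟩
  by_contra hfree
  exact hM.not_prop_of_gt (M.lt_sup_edge x y hGxy.ne fun h => hHxy (hMH h))
    ⟨sup_le hM.prop.1 hedge, hfree⟩

lemma exists_weaklySaturated [Finite V] (G : SimpleGraph V) (F : SimpleGraph W)
    (hF : ¬ HasCopy F (⊥ : SimpleGraph V)) : ∃ H, WeaklySaturated G F H := by
  obtain ⟨M, hM⟩ := (Set.toFinite {M | M ≤ G ∧ ¬ HasCopy F M}).exists_maximal ⟨⊥, bot_le, hF⟩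
  exact ⟨M, hM.prop.1, hM.prop.2, exists_satProcess_addEdges_eq hM le_rfl hM.prop.1⟩

lemma exists_ncard_edgeSet_eq_wsat {G : SimpleGraph V} (h : ∃ H, WeaklySaturated G F H) :
    ∃ H, WeaklySaturated G F H ∧ H.edgeSet.ncard = wsat G F :=
  let ⟨H, hH⟩ := h
  Nat.sInf_mem (s := {m | ∃ H, WeaklySaturated G F H ∧ H.edgeSet.ncard = m}) ⟨_, H, hH, rfl⟩

lemma WeaklySaturated.two_mul_ncard_edgeSet_add_le [Fintype W] [Fintype V] [DecidableRel F.Adj]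
    {H : SimpleGraph V} (hH : WeaklySaturated ⊤ F H) (hWV : Fintype.card W ≤ Fintype.card V) :
    2 * F.edgeSet.ncard + (Fintype.card V - Fintype.card W) * (F.minDegree - 1)
      ≤ 2 * H.edgeSet.ncard + 2 := by
  obtain ⟨-, hfree, l, hl, htop⟩ := hH
  have hdeg : ∀ v, F.minDegree - 1 ≤ (H.neighborSet v).ncard := fun v => by
    rcases hl.ncard_neighborSet_addEdges_le_or F.minDegree_le_ncard_neighborSet v with h | h
    · rw [htop, neighborSet_top, Set.ncard_compl, Set.ncard_singleton,
        Nat.card_eq_fintype_card] at h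
      have := F.minDegree_le_card
      omega
    · exact h
  obtain _ | ⟨⟨x, y⟩, l⟩ := l
  · obtain ⟨ι⟩ := Function.Embedding.nonempty_of_card_le hWV
    rw [addEdges_nil] at htop
    exact absurd (htop ▸ hasCopy_top F ι) hfree
  obtain ⟨⟨hxy, f, a, b, hab, rfl, rfl, hf⟩, -⟩ := hl
  have := two_mul_ncard_edgeSet_add_le_of_hom (G := H ⊔ edge (f a) (f b)) f hf
    fun v _ => (hdeg v).trans (Set.ncard_le_ncard (neighborSet_mono le_sup_left v))
  rw [ncard_edgeSet_sup_edge (f.injective.ne hab.ne) hxy] at this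
  omega

end WeakSaturation

/-- for a graph `F` with `s` vertices, `t` edges and minimum degree
`δ ≥ 1`, for every `n ≥ s`, `wsat(K_n, F) ≥ t - 1 + (δ-1)(n-s)/2`. -/
theorem stmt1 {s n : ℕ} (F : SimpleGraph (Fin s)) [DecidableRel F.Adj]
    (hδ : 1 ≤ F.minDegree) (hn : s ≤ n) :
    (F.edgeSet.ncard : ℝ) - 1 +
        ((F.minDegree : ℝ) - 1) * ((n : ℝ) - s) / 2
      ≤ (wsat (⊤ : SimpleGraph (Fin n)) F : ℝ) := by
  obtain ⟨a⟩ : Nonempty (Fin s) := by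
    by_contra h
    rw [not_nonempty_iff] at h
    simp [minDegree_of_subsingleton] at hδ
  obtain ⟨b, hab⟩ := (F.degree_pos_iff_exists_adj a).mp (hδ.trans (F.minDegree_le_degree a))
  obtain ⟨H, hH, hcard⟩ := exists_ncard_edgeSet_eq_wsat
    (exists_weaklySaturated (⊤ : SimpleGraph (Fin n)) F (not_hasCopy_bot hab))
  have hcount := hH.two_mul_ncard_edgeSet_add_le (by simpa using hn)
  simp only [Fintype.card_fin] at hcount
  have hcount' : (2 * F.edgeSet.ncard + (n - s : ℝ) * (F.minDegree - 1) : ℝ)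
      ≤ 2 * H.edgeSet.ncard + 2 := by
    exact_mod_cast hcount
  rw [← hcard]
  linarith
end

section
/- Let F be a graph with δ(F) ≥ 1 and let n ≥ |V(F)|. If a weakly (K_n,F)-saturated graph H is disconnected and H ≠ K_n, then in any valid weak saturation ordering, the first edge joining two connected components of H is a cut edge of the copy of F it creates. Consequently, if F has no cut edge, every weakly (K_n,F)-saturated graph H with H ≠ K_n is connected, and wsat(K_n,F) ≥ n - 1. -/
open SimpleGraph Finset Filter

/-!
Let `xy` be the first edge of the saturation process whose endpoints lie in different
components of `H`. Every earlier added edge joins two vertices of the same component, so in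
the copy of `F` created by `xy` every edge other than `xy` lies inside a component of `H`.
If `xy` were not a cut edge of that copy, its endpoints would be joined in `F - xy`, hence
in `H`. So a bridgeless `F` forces `H` to be connected, and a connected graph on `n` vertices
has at least `n - 1` edges.
-/

variable {W V : Type*}

lemma addEdges_adj {H : SimpleGraph V} {l : List (V × V)} {u v : V} :
    (addEdges H l).Adj u v ↔ H.Adj u v ∨ (∃ p ∈ l, s(u, v) = s(p.1, p.2)) ∧ u ≠ v := by
  simp [addEdges]

lemma addEdges_cons_s9 (H : SimpleGraph V) (e : V × V) (l : List (V × V)) :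
    addEdges H (e :: l) = addEdges (H ⊔ fromEdgeSet {s(e.1, e.2)}) l := by
  ext u v
  simp only [addEdges_adj, sup_adj, fromEdgeSet_adj, Set.mem_singleton_iff, List.mem_cons,
    exists_eq_or_imp]
  tauto

lemma reachable_of_addEdges_adj {H : SimpleGraph V} {l : List (V × V)} {u v : V}
    (h : (addEdges H l).Adj u v)
    (hl : ∀ p ∈ l, s(u, v) = s(p.1, p.2) → H.Reachable p.1 p.2) :
    H.Reachable u v := by
  rcases addEdges_adj.mp h with hH | ⟨⟨p, hp, huv⟩, -⟩
  · exact hH.reachable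
  · have hp := hl p hp huv
    rcases Sym2.eq_iff.mp huv with ⟨rfl, rfl⟩ | ⟨rfl, rfl⟩
    exacts [hp, hp.symm]

lemma SatProcess.exists_copy_get {F : SimpleGraph W} {H : SimpleGraph V} {l : List (V × V)}
    (hl : SatProcess F H l) (i : Fin l.length) :
    ∃ f : W ↪ V, ∃ a b : W, F.Adj a b ∧ f a = (l.get i).1 ∧ f b = (l.get i).2 ∧
      ∀ c d, F.Adj c d → (addEdges H (l.take (i + 1))).Adj (f c) (f d) := by
  induction l generalizing H with
  | nil => exact i.elim0
  | cons e l ih =>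
    obtain ⟨⟨-, f, a, b, hab, hfa, hfb, hcopy⟩, hl⟩ := hl
    cases i using Fin.cases with
    | zero =>
      refine ⟨f, a, b, hab, hfa, hfb, ?_⟩
      simpa [addEdges_cons_s9, addEdges] using hcopy
    | succ i =>
      simpa [addEdges_cons_s9] using ih hl i

lemma isBridge_of_not_reachable_map {F : SimpleGraph W} {H : SimpleGraph V} (f : W → V)
    {a b : W} (hfab : ¬ H.Reachable (f a) (f b))
    (hf : ∀ c d, F.Adj c d → s(c, d) ≠ s(a, b) → H.Reachable (f c) (f d)) :
    F.IsBridge s(a, b) := by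
  refine isBridge_iff.mpr fun hre => hfab ?_
  rw [reachable_eq_reflTransGen] at hre ⊢
  refine Relation.ReflTransGen.lift' f (fun c d hcd => ?_) a b hre
  rw [deleteEdges_adj, Set.mem_singleton_iff] at hcd
  exact (reachable_iff_reflTransGen _ _).mp (hf c d hcd.1 hcd.2)

theorem isBridge_of_first_edge_joining_components {F : SimpleGraph W} {H : SimpleGraph V}
    {l : List (V × V)} {i : Fin l.length} (hi : ¬ H.Reachable (l.get i).1 (l.get i).2)
    (hprev : ∀ j : Fin l.length, (j : ℕ) < i → H.Reachable (l.get j).1 (l.get j).2)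
    (f : W ↪ V) {a b : W} (hfa : f a = (l.get i).1) (hfb : f b = (l.get i).2)
    (hcopy : ∀ c d, F.Adj c d → (addEdges H (l.take (i + 1))).Adj (f c) (f d)) :
    F.IsBridge s(a, b) := by
  refine isBridge_of_not_reachable_map f (hfa ▸ hfb ▸ hi) fun c d hcd hne => ?_
  refine reachable_of_addEdges_adj (hcopy c d hcd) fun p hp hcdp => ?_
  obtain ⟨k, hk, rfl⟩ := List.mem_take_iff_getElem.mp hp
  have hki : k < i + 1 := (lt_min_iff.mp hk).1
  rcases Nat.lt_succ_iff_lt_or_eq.mp hki with hki | rfl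
  · exact hprev ⟨k, _⟩ hki
  · refine absurd (Sym2.map.injective f.injective ?_) hne
    simpa [hfa, hfb] using hcdp

theorem SatProcess.connected [Nonempty V] {F : SimpleGraph W}
    (hF : ∀ e ∈ F.edgeSet, ¬ F.IsBridge e) {H : SimpleGraph V} {l : List (V × V)}
    (hl : SatProcess F H l) (htop : addEdges H l = ⊤) : H.Connected := by
  refine ⟨fun x y => by_contra fun hxy => ?_⟩
  have hcross : ∃ i : Fin l.length, ¬ H.Reachable (l.get i).1 (l.get i).2 := by
    by_contra! hall
    refine hxy (reachable_of_addEdges_adj (l := l) ?_ fun p hp _ => ?_)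
    · rw [htop, top_adj]
      exact fun h => hxy (h ▸ Reachable.refl x)
    · obtain ⟨i, rfl⟩ := List.get_of_mem hp
      exact hall i
  obtain ⟨i, hi, hmin⟩ := wellFounded_lt.has_min _ hcross
  obtain ⟨f, a, b, hab, hfa, hfb, hcopy⟩ := hl.exists_copy_get i
  refine hF _ hab (isBridge_of_first_edge_joining_components hi (fun j hj => ?_) f hfa hfb hcopy)
  exact not_not.mp fun hj' => hmin j hj' hj

theorem stmt9_general {s n : ℕ} (F : SimpleGraph (Fin s))
    (H : SimpleGraph (Fin n)) (hH : WeaklySaturated (⊤ : SimpleGraph (Fin n)) F H)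
    (hne : H ≠ (⊤ : SimpleGraph (Fin n))) :
    (∀ l : List (Fin n × Fin n), SatProcess F H l → addEdges H l = ⊤ →
      ∀ i : Fin l.length,
        ¬ H.Reachable (l.get i).1 (l.get i).2 →
        (∀ j : Fin l.length, (j : ℕ) < (i : ℕ) → H.Reachable (l.get j).1 (l.get j).2) →
        ∀ (f : Fin s ↪ Fin n) (a b : Fin s), F.Adj a b →
          f a = (l.get i).1 → f b = (l.get i).2 →
          (∀ c d, F.Adj c d →
            (addEdges H (l.take ((i : ℕ) + 1))).Adj (f c) (f d)) →
          F.IsBridge s(a, b)) ∧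
    ((∀ e ∈ F.edgeSet, ¬ F.IsBridge e) →
      H.Connected ∧ n - 1 ≤ wsat (⊤ : SimpleGraph (Fin n)) F) := by
  refine ⟨fun l _ _ _ hi hprev f _ _ _ hfa hfb hcopy =>
    isBridge_of_first_edge_joining_components hi hprev f hfa hfb hcopy, fun hF => ⟨?_, ?_⟩⟩
  · have : Nonempty (Fin n) := not_isEmpty_iff.mp fun _ => hne (Subsingleton.elim _ _)
    obtain ⟨-, -, l, hl, htop⟩ := hH
    exact hl.connected hF htop
  · refine le_csInf ⟨_, H, hH, rfl⟩ ?_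
    rintro _ ⟨H', ⟨-, -, l, hl, htop⟩, rfl⟩
    rcases n.eq_zero_or_pos with rfl | hn
    · exact Nat.zero_le _
    have : Nonempty (Fin n) := ⟨⟨0, hn⟩⟩
    have hcard := (hl.connected hF htop).card_vert_le_card_edgeSet_add_one
    rw [Nat.card_eq_fintype_card, Fintype.card_fin, Nat.card_coe_set_eq] at hcard
    omega

/-- if a weakly `(K_n, F)`-saturated graph `H ≠ K_n` is disconnected then,
in any valid saturation ordering, the first added edge joining two connected components
of `H` is a cut edge of every copy of `F` it creates; consequently, if `F` has no cut
edge then every weakly `(K_n, F)`-saturated graph `H ≠ K_n` is connected and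
`wsat(K_n, F) ≥ n - 1`. -/
theorem stmt9 {s n : ℕ} (F : SimpleGraph (Fin s)) [DecidableRel F.Adj]
    (hδ : 1 ≤ F.minDegree) (hn : s ≤ n)
    (H : SimpleGraph (Fin n)) (hH : WeaklySaturated (⊤ : SimpleGraph (Fin n)) F H)
    (hne : H ≠ (⊤ : SimpleGraph (Fin n))) :
    (∀ l : List (Fin n × Fin n), SatProcess F H l → addEdges H l = ⊤ →
      ∀ i : Fin l.length,
        ¬ H.Reachable (l.get i).1 (l.get i).2 →
        (∀ j : Fin l.length, (j : ℕ) < (i : ℕ) → H.Reachable (l.get j).1 (l.get j).2) →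
        ∀ (f : Fin s ↪ Fin n) (a b : Fin s), F.Adj a b →
          f a = (l.get i).1 → f b = (l.get i).2 →
          (∀ c d, F.Adj c d →
            (addEdges H (l.take ((i : ℕ) + 1))).Adj (f c) (f d)) →
          F.IsBridge s(a, b)) ∧
    ((∀ e ∈ F.edgeSet, ¬ F.IsBridge e) →
      H.Connected ∧ n - 1 ≤ wsat (⊤ : SimpleGraph (Fin n)) F) :=
  stmt9_general F H hH hne
end
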